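/- arXiv:1508.03110 — 2 statements merged into one kernel-verified Lean document; each statement's English description precedes it below -/
import Mathlib

section
/- For fixed M, the function U ↦ L(R,U,M) is a strictly convex quadratic function of the entries of U whenever λ > 0 and every user has rated at least one movie, and therefore it has a unique global minimizer, given column-wise by u_i = (M_{I_i} M_{I_i}^T + λ n_{u_i} I)^{-1} M_{I_i} R(i,I_i)^T. -/
open Finset Filter

noncomputable section

/-- Dot product of two factor vectors in ℝ^{n_f}. -/
def dotp {nf : ℕ} (x y : Fin nf → ℝ) : ℝ := ∑ k, x k * y k

/-- Number of ratings by user `i` (n_{u_i} = |I_i|). -/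
def nRatU {nu nm : ℕ} (I : Finset (Fin nu × Fin nm)) (i : Fin nu) : ℕ :=
  (I.filter (fun p => p.1 = i)).card

/-- Number of ratings of movie `j` (n_{m_j}). -/
def nRatM {nu nm : ℕ} (I : Finset (Fin nu × Fin nm)) (j : Fin nm) : ℕ :=
  (I.filter (fun p => p.2 = j)).card

/-- Regularized squared loss L(R,U,M). -/
def loss {nf nu nm : ℕ} (lam : ℝ) (R : Fin nu → Fin nm → ℝ)
    (I : Finset (Fin nu × Fin nm))
    (U : Fin nu → Fin nf → ℝ) (M : Fin nm → Fin nf → ℝ) : ℝ :=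
  (∑ p ∈ I, (R p.1 p.2 - dotp (U p.1) (M p.2)) ^ 2)
  + lam * ((∑ i, (nRatU I i : ℝ) * dotp (U i) (U i))
         + (∑ j, (nRatM I j : ℝ) * dotp (M j) (M j)))

/-!
For fixed `M` the loss is a quadratic polynomial in `U`:
`L(U + t D) = L(U) + 2 t ∑ᵢ ⟪Dᵢ, Gᵢ uᵢ - bᵢ⟫ + t² Q(D)` with `Gᵢ = M_{Iᵢ} M_{Iᵢ}ᵀ + λ n_{uᵢ} I`,
`bᵢ = M_{Iᵢ} R(i, Iᵢ)ᵀ` and `Q(D) = ∑_{(i,j) ∈ I} ⟪Dᵢ, mⱼ⟫² + λ ∑ᵢ n_{uᵢ} ‖Dᵢ‖²`. Since every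
`n_{uᵢ} ≥ 1`, `Q` is positive definite, which gives strict convexity along every segment. Each `Gᵢ`
is positive definite, hence invertible, and `uᵢ = Gᵢ⁻¹ bᵢ` kills the linear term, so
`L(U* + D) = L(U*) + Q(D) > L(U*)` for `D ≠ 0`.
-/

open Matrix

def HasQuadraticExpansion {E : Type*} [AddCommGroup E] [Module ℝ E]
    (f : E → ℝ) (g : E → E → ℝ) (q : E → ℝ) : Prop :=
  ∀ x d (t : ℝ), f (x + t • d) = f x + t * g x d + t ^ 2 * q d

namespace HasQuadraticExpansion

variable {E : Type*} [AddCommGroup E] [Module ℝ E] {f : E → ℝ} {g : E → E → ℝ} {q : E → ℝ}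

theorem strictConvexOn (hf : HasQuadraticExpansion f g q) (hq : ∀ d ≠ 0, 0 < q d) :
    StrictConvexOn ℝ Set.univ f := by
  refine ⟨convex_univ, fun x _ y _ hxy a b ha hb hab => ?_⟩
  obtain rfl : a = 1 - b := eq_sub_of_add_eq hab
  have hmid : (1 - b) • x + b • y = x + b • (y - x) := by
    rw [smul_sub, sub_smul, one_smul]; abel
  have hy : f y = f x + g x (y - x) + q (y - x) := by
    simpa using hf x (y - x) 1
  rw [hmid, hf, hy, smul_eq_mul, smul_eq_mul]
  nlinarith [mul_pos (mul_pos ha hb) (hq _ (sub_ne_zero.mpr hxy.symm))]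

theorem apply_lt_of_ne (hf : HasQuadraticExpansion f g q) (hq : ∀ d ≠ 0, 0 < q d)
    {x : E} (hx : ∀ d, g x d = 0) {y : E} (hy : y ≠ x) : f x < f y := by
  have hxy := hf x (y - x) 1
  rw [one_smul, add_sub_cancel, hx, one_pow] at hxy
  linarith [hq _ (sub_ne_zero.mpr hy)]

theorem apply_le (hf : HasQuadraticExpansion f g q) (hq : ∀ d ≠ 0, 0 < q d)
    {x : E} (hx : ∀ d, g x d = 0) (y : E) : f x ≤ f y := by
  rcases eq_or_ne y x with rfl | hy
  · exact le_rfl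
  · exact (hf.apply_lt_of_ne hq hx hy).le

end HasQuadraticExpansion

theorem dotp_eq_dotProduct {nf : ℕ} (x y : Fin nf → ℝ) : dotp x y = x ⬝ᵥ y := rfl

section CollaborativeFiltering

variable {nf nu nm : ℕ} (lam : ℝ) (R : Fin nu → Fin nm → ℝ) (I : Finset (Fin nu × Fin nm))
  (M : Fin nm → Fin nf → ℝ)

-- `M_{Iᵢ} M_{Iᵢ}ᵀ + λ n_{uᵢ} I`, where `M_{Iᵢ}` has the columns `m_j` rated by user `i`.
def userGram (i : Fin nu) : Matrix (Fin nf) (Fin nf) ℝ :=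
  ∑ p ∈ I.filter (·.1 = i), vecMulVec (M p.2) (M p.2) + (lam * nRatU I i) • 1

def userRhs (i : Fin nu) : Fin nf → ℝ :=
  ∑ p ∈ I.filter (·.1 = i), R i p.2 • M p.2

def lossQuad (D : Fin nu → Fin nf → ℝ) : ℝ :=
  ∑ p ∈ I, dotp (D p.1) (M p.2) ^ 2 + lam * ∑ i, (nRatU I i : ℝ) * dotp (D i) (D i)

theorem userGram_mulVec (i : Fin nu) (u : Fin nf → ℝ) :
    userGram lam I M i *ᵥ u
      = ∑ p ∈ I.filter (·.1 = i), dotp u (M p.2) • M p.2 + (lam * nRatU I i) • u := by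
  simp [userGram, add_mulVec, sum_mulVec, vecMulVec_mulVec, smul_mulVec, dotp_eq_dotProduct,
    dotProduct_comm]

theorem loss_add_smul (U D : Fin nu → Fin nf → ℝ) (t : ℝ) :
    loss lam R I (U + t • D) M = loss lam R I U M
      + t * (2 * (∑ p ∈ I, (dotp (U p.1) (M p.2) - R p.1 p.2) * dotp (D p.1) (M p.2)
          + lam * ∑ i, (nRatU I i : ℝ) * dotp (U i) (D i)))
      + t ^ 2 * lossQuad lam I M D := by
  have hfit : ∑ p ∈ I, (R p.1 p.2 - dotp ((U + t • D) p.1) (M p.2)) ^ 2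
      = ∑ p ∈ I, ((R p.1 p.2 - dotp (U p.1) (M p.2)) ^ 2
        + 2 * t * ((dotp (U p.1) (M p.2) - R p.1 p.2) * dotp (D p.1) (M p.2))
        + t ^ 2 * dotp (D p.1) (M p.2) ^ 2) := by
    refine sum_congr rfl fun p _ => ?_
    simp only [Pi.add_apply, Pi.smul_apply, dotp_eq_dotProduct, add_dotProduct, smul_dotProduct,
      smul_eq_mul]
    ring
  have hreg : ∑ i, (nRatU I i : ℝ) * dotp ((U + t • D) i) ((U + t • D) i)
      = ∑ i, ((nRatU I i : ℝ) * dotp (U i) (U i)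
        + 2 * t * ((nRatU I i : ℝ) * dotp (U i) (D i))
        + t ^ 2 * ((nRatU I i : ℝ) * dotp (D i) (D i))) := by
    refine sum_congr rfl fun i _ => ?_
    simp only [Pi.add_apply, Pi.smul_apply, dotp_eq_dotProduct, add_dotProduct, dotProduct_add,
      smul_dotProduct, dotProduct_smul, smul_eq_mul, dotProduct_comm (D i) (U i)]
    ring
  simp only [loss, lossQuad, hfit, hreg, sum_add_distrib, ← mul_sum]
  ring

theorem sum_dotProduct_userGram_mulVec_sub (U D : Fin nu → Fin nf → ℝ) :
    ∑ i, D i ⬝ᵥ (userGram lam I M i *ᵥ U i - userRhs R I M i)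
      = ∑ p ∈ I, (dotp (U p.1) (M p.2) - R p.1 p.2) * dotp (D p.1) (M p.2)
        + lam * ∑ i, (nRatU I i : ℝ) * dotp (U i) (D i) := by
  have huser : ∀ i, D i ⬝ᵥ (userGram lam I M i *ᵥ U i - userRhs R I M i)
      = ∑ p ∈ I.filter (·.1 = i), (dotp (U p.1) (M p.2) - R p.1 p.2) * dotp (D p.1) (M p.2)
        + lam * ((nRatU I i : ℝ) * dotp (U i) (D i)) := by
    intro i
    rw [sum_congr rfl fun p hp => by rw [(mem_filter.mp hp).2]]
    simp only [userGram_mulVec, userRhs, dotProduct_sub, dotProduct_add, dotProduct_sum,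
      dotProduct_smul, smul_eq_mul, sub_mul, sum_sub_distrib, dotp_eq_dotProduct,
      dotProduct_comm (D i) (U i)]
    ring
  rw [sum_congr rfl fun i _ => huser i, sum_add_distrib, ← mul_sum, sum_fiberwise]

theorem loss_hasQuadraticExpansion :
    HasQuadraticExpansion (fun U => loss lam R I U M)
      (fun U D => 2 * ∑ i, D i ⬝ᵥ (userGram lam I M i *ᵥ U i - userRhs R I M i))
      (lossQuad lam I M) := fun U D t => by
  dsimp only
  rw [loss_add_smul, sum_dotProduct_userGram_mulVec_sub]

variable {lam I}

theorem userGram_posDef (hlam : 0 < lam) {i : Fin nu} (hi : 1 ≤ nRatU I i) :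
    (userGram lam I M i).PosDef := by
  have hn : (0 : ℝ) < nRatU I i := by exact_mod_cast hi
  refine PosDef.posSemidef_add (posSemidef_sum _ fun p _ => ?_) (PosDef.one.smul (mul_pos hlam hn))
  simpa using posSemidef_vecMulVec_self_star (M p.2)

theorem lossQuad_pos (hlam : 0 < lam) (hrated : ∀ i, 1 ≤ nRatU I i) {D : Fin nu → Fin nf → ℝ}
    (hD : D ≠ 0) : 0 < lossQuad lam I M D := by
  obtain ⟨i, hi⟩ := Function.ne_iff.mp hD
  have hreg : 0 < ∑ i, (nRatU I i : ℝ) * dotp (D i) (D i) := by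
    refine sum_pos' (fun j _ => mul_nonneg (Nat.cast_nonneg _) ?_) ⟨i, mem_univ i, ?_⟩
    · simpa [dotp_eq_dotProduct] using dotProduct_star_self_nonneg (D j)
    · refine mul_pos (by exact_mod_cast hrated i) ?_
      simpa [dotp_eq_dotProduct] using dotProduct_star_self_pos_iff.mpr hi
  have hfit : 0 ≤ ∑ p ∈ I, dotp (D p.1) (M p.2) ^ 2 := sum_nonneg fun p _ => sq_nonneg _
  unfold lossQuad
  nlinarith

end CollaborativeFiltering

/-- For fixed M, U ↦ L(R,U,M) is strictly convex (λ > 0, every user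
has at least one rating), hence has a unique global minimizer, given columnwise by
u_i = (M_{I_i} M_{I_i}^T + λ n_{u_i} I)⁻¹ M_{I_i} R(i,I_i)^T, i.e. the unique
minimizer solves the corresponding linear system for each user. -/
theorem stmt2 {nf nu nm : ℕ} (lam : ℝ) (hlam : 0 < lam)
    (R : Fin nu → Fin nm → ℝ) (I : Finset (Fin nu × Fin nm))
    (M : Fin nm → Fin nf → ℝ) (hrated : ∀ i : Fin nu, 1 ≤ nRatU I i) :
    StrictConvexOn ℝ Set.univ
      (fun U : Fin nu → Fin nf → ℝ => loss lam R I U M)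
    ∧ ∃! Ustar : Fin nu → Fin nf → ℝ,
        (∀ V : Fin nu → Fin nf → ℝ, loss lam R I Ustar M ≤ loss lam R I V M)
        ∧ (∀ (i : Fin nu) (k : Fin nf),
            (∑ p ∈ I.filter (fun p => p.1 = i), M p.2 k * dotp (Ustar i) (M p.2))
              + lam * (nRatU I i : ℝ) * Ustar i k
            = ∑ p ∈ I.filter (fun p => p.1 = i), M p.2 k * R i p.2) := by
  have hexp := loss_hasQuadraticExpansion lam R I M
  have hq : ∀ D ≠ 0, 0 < lossQuad lam I M D := fun D => lossQuad_pos M hlam hrated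
  set Ustar : Fin nu → Fin nf → ℝ := fun i => (userGram lam I M i)⁻¹ *ᵥ userRhs R I M i
  have hnormal : ∀ i, userGram lam I M i *ᵥ Ustar i = userRhs R I M i := fun i => by
    have hunit := (userGram_posDef M hlam (hrated i)).isUnit
    rw [mulVec_mulVec, mul_nonsing_inv _ ((isUnit_iff_isUnit_det _).mp hunit), one_mulVec]
  have hcrit : ∀ D : Fin nu → Fin nf → ℝ,
      2 * ∑ i, D i ⬝ᵥ (userGram lam I M i *ᵥ Ustar i - userRhs R I M i) = 0 := by
    simp [hnormal]
  refine ⟨hexp.strictConvexOn hq, Ustar, ⟨hexp.apply_le hq hcrit, fun i k => ?_⟩, ?_⟩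
  · simpa [userGram_mulVec, userRhs, Finset.sum_apply, mul_comm] using congrFun (hnormal i) k
  · rintro W ⟨hW, -⟩
    by_contra hne
    exact (hexp.apply_lt_of_ne hq hcrit hne).not_ge (hW Ustar)
end
end

section
/- Let ḡ = x − P(x) where P(x) performs the exact ALS update of U only (with M fixed, λ > 0). Then −ḡ is a descent direction for L at x unless ḡ = 0: specifically, g^T ḡ ≥ 0 with equality iff ḡ = 0, because ḡ restricted to each user block equals A_i^{-1} times half the user-block gradient, and each A_i is symmetric positive definite. -/
open Finset Filter

noncomputable section

/-
For each user, `G i = 2 A_i (u_i - u_i*)` with `A_i = λ n_{u_i} I + Σ_{j ∈ I_i} m_j m_jᵀ`, since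
`A_i u_i* = v_i`. Hence `⟨G i, u_i - u_i*⟩ = 2 (λ n_{u_i} ‖d‖² + Σ_j ⟨d, m_j⟩²)` with
`d = u_i - u_i*`, which is nonnegative and vanishes only at `d = 0` because `λ n_{u_i} > 0`.
-/

open Matrix

section GramForm

variable {R n ι : Type*} [CommRing R] [Fintype n]

theorem regularizedGram_dotProduct_self (c : R) (s : Finset ι) (m : ι → n → R) (d : n → R) :
    (c • d + ∑ p ∈ s, (d ⬝ᵥ m p) • m p) ⬝ᵥ d = c * (d ⬝ᵥ d) + ∑ p ∈ s, (d ⬝ᵥ m p) ^ 2 := by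
  simp only [add_dotProduct, smul_dotProduct, sum_dotProduct, smul_eq_mul, dotProduct_comm (m _) d,
    sq]

variable [LinearOrder R] [IsStrictOrderedRing R]

theorem regularizedGram_dotProduct_self_nonneg {c : R} (hc : 0 ≤ c) (s : Finset ι)
    (m : ι → n → R) (d : n → R) : 0 ≤ (c • d + ∑ p ∈ s, (d ⬝ᵥ m p) • m p) ⬝ᵥ d := by
  rw [regularizedGram_dotProduct_self]
  have hd : 0 ≤ d ⬝ᵥ d := Finset.sum_nonneg fun k _ => mul_self_nonneg (d k)
  positivity

theorem regularizedGram_dotProduct_self_eq_zero_iff {c : R} (hc : 0 < c) (s : Finset ι)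
    (m : ι → n → R) (d : n → R) : (c • d + ∑ p ∈ s, (d ⬝ᵥ m p) • m p) ⬝ᵥ d = 0 ↔ d = 0 := by
  rw [regularizedGram_dotProduct_self]
  have hd : 0 ≤ d ⬝ᵥ d := Finset.sum_nonneg fun k _ => mul_self_nonneg (d k)
  have hsq : 0 ≤ ∑ p ∈ s, (d ⬝ᵥ m p) ^ 2 := by positivity
  constructor
  · intro h
    have hcd : c * (d ⬝ᵥ d) = 0 := by linarith [mul_nonneg hc.le hd]
    exact dotProduct_self_eq_zero.mp ((mul_eq_zero.mp hcd).resolve_left hc.ne')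
  · rintro rfl
    simp

end GramForm

theorem userGradient_eq_two_smul_regularizedGram {nf : ℕ} {ι : Type*} (s : Finset ι)
    (m : ι → Fin nf → ℝ) (r : ι → ℝ) (c : ℝ) (u ustar g : Fin nf → ℝ)
    (hstar : ∀ k, ∑ p ∈ s, m p k * dotp ustar (m p) + c * ustar k = ∑ p ∈ s, m p k * r p)
    (hg : ∀ k, g k = 2 * c * u k + 2 * ∑ p ∈ s, m p k * (dotp u (m p) - r p)) :
    g = (2 : ℝ) • (c • (u - ustar) + ∑ p ∈ s, ((u - ustar) ⬝ᵥ m p) • m p) := by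
  funext k
  simp only [dotp_eq_dotProduct] at hstar hg
  simp only [Pi.smul_apply, Pi.add_apply, Pi.sub_apply, Finset.sum_apply, smul_eq_mul,
    sub_dotProduct]
  rw [hg k]
  simp only [mul_sub, Finset.sum_sub_distrib]
  rw [← hstar k]
  simp only [sub_mul, Finset.sum_sub_distrib, mul_comm (_ ⬝ᵥ _)]
  ring

/-- Let ḡ = x − P(x) where P performs the exact ALS update of U
only (M fixed, λ > 0, each user has ratings): its user blocks are
u_i − A_i⁻¹ v_i (here Ustar i = A_i⁻¹ v_i solves the linear system) and its
movie blocks are zero. Then gᵀḡ ≥ 0 with equality iff ḡ = 0, so −ḡ is a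
descent direction for L unless ḡ = 0. The user-block gradient of L is
G_i = 2 λ n_{u_i} u_i + 2 ∑_{j∈I_i} m_j (u_iᵀm_j − r_{ij}). -/
theorem stmt18 {nf nu nm : ℕ} (lam : ℝ) (hlam : 0 < lam)
    (R : Fin nu → Fin nm → ℝ) (I : Finset (Fin nu × Fin nm))
    (hrated : ∀ i : Fin nu, 1 ≤ nRatU I i)
    (U Ustar : Fin nu → Fin nf → ℝ) (M : Fin nm → Fin nf → ℝ)
    (hUstar : ∀ (i : Fin nu) (k : Fin nf),
      (∑ p ∈ I.filter (fun p => p.1 = i), M p.2 k * dotp (Ustar i) (M p.2))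
        + lam * (nRatU I i : ℝ) * Ustar i k
      = ∑ p ∈ I.filter (fun p => p.1 = i), M p.2 k * R i p.2)
    (G : Fin nu → Fin nf → ℝ)
    (hG : ∀ (i : Fin nu) (k : Fin nf),
      G i k = 2 * lam * (nRatU I i : ℝ) * U i k
        + 2 * ∑ p ∈ I.filter (fun p => p.1 = i),
            M p.2 k * (dotp (U i) (M p.2) - R i p.2)) :
    0 ≤ ∑ i, dotp (G i) (U i - Ustar i)
    ∧ ((∑ i, dotp (G i) (U i - Ustar i)) = 0 ↔ ∀ i, U i = Ustar i) := by
  have hblock : ∀ i, 0 ≤ dotp (G i) (U i - Ustar i) ∧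
      (dotp (G i) (U i - Ustar i) = 0 ↔ U i = Ustar i) := by
    intro i
    have hc : 0 < lam * (nRatU I i : ℝ) :=
      mul_pos hlam (by exact_mod_cast hrated i)
    have hGi := userGradient_eq_two_smul_regularizedGram (I.filter (fun p => p.1 = i))
      (fun p => M p.2) (fun p => R i p.2) (lam * (nRatU I i : ℝ)) (U i) (Ustar i) (G i)
      (hUstar i) (fun k => (hG i k).trans (by ring))
    rw [dotp_eq_dotProduct, hGi, smul_dotProduct, smul_eq_mul, mul_eq_zero,
      regularizedGram_dotProduct_self_eq_zero_iff hc, sub_eq_zero]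
    exact ⟨mul_nonneg zero_le_two (regularizedGram_dotProduct_self_nonneg hc.le _ _ _),
      or_iff_right two_ne_zero⟩
  refine ⟨Finset.sum_nonneg fun i _ => (hblock i).1, ?_⟩
  rw [Finset.sum_eq_zero_iff_of_nonneg fun i _ => (hblock i).1]
  simp only [Finset.mem_univ, true_implies, (hblock _).2]
end
end
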